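/- For sufficiently large real x > 1 and fixed integer s ≥ 2: Σ_{n ≤ x} ψ_s(n)/n^s = (ζ(s+1)/ζ(2s+2)) x − Σ_{d ≤ x} (|μ(d)|/d^s) ϑ(x/d) − ζ(s)/(2ζ(2s)) + O_s(x^{1−s}), where ϑ(y) = y − ⌊y⌋ − 1/2. -/

import Mathlib

/-!
Since `ψ_s(n)/n^s = ∑_{d ∣ n} |μ(d)|/d^s`, the partial sum up to `x` is
`∑_{d ≤ x} (|μ(d)|/d^s) ⌊x/d⌋`, and writing `⌊x/d⌋ = x/d - ϑ(x/d) - 1/2` turns it into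
`x ∑_{d ≤ x} |μ(d)|/d^(s+1) - ∑_{d ≤ x} (|μ(d)|/d^s) ϑ(x/d) - ½ ∑_{d ≤ x} |μ(d)|/d^s`.
Every `n ≥ 1` is uniquely `b² a` with `a` squarefree, so `∑ |μ(n)|/n^t = ζ(t)/ζ(2t)` for `t ≥ 2`,
and the tail of this series beyond `N` is at most `N^(1-t)`. Completing the two partial sums
to these series therefore costs `O(x · x^(-s)) + O(x^(1-s))`.
-/

open Finset Filter

/-- The generalized Dedekind function `ψ_s = id_s * |μ|`. -/
noncomputable def dedekindPsi (s n : ℕ) : ℝ :=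
  ∑ p ∈ n.divisorsAntidiagonal, (p.1 : ℝ) ^ s * |((ArithmeticFunction.moebius p.2 : ℤ) : ℝ)|

/-- `ϑ(y) = y − ⌊y⌋ − 1/2`. -/
noncomputable def vartheta (y : ℝ) : ℝ := y - ⌊y⌋ - 1 / 2

open ArithmeticFunction Asymptotics
open scoped ArithmeticFunction.Moebius ArithmeticFunction.zeta

noncomputable def absMoebius (n : ℕ) : ℝ := |((μ n : ℤ) : ℝ)|

lemma absMoebius_eq_ite (n : ℕ) : absMoebius n = if Squarefree n then 1 else 0 := by
  rw [absMoebius, ← Int.cast_abs, abs_moebius]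
  split_ifs <;> simp

lemma abs_absMoebius_le_one (n : ℕ) : |absMoebius n| ≤ 1 := by
  rw [absMoebius_eq_ite]
  split_ifs <;> norm_num

section Tail

variable {f : ℕ → ℝ} {t : ℕ}

lemma summable_div_pow_of_abs_le_one (hf : ∀ n, |f n| ≤ 1) (ht : 2 ≤ t) :
    Summable fun n : ℕ => f n / (n : ℝ) ^ t :=
  (Real.summable_one_div_nat_pow (p := t) |>.2 (by omega)).of_norm_bounded fun n => by
    rw [Real.norm_eq_abs, abs_div, abs_of_nonneg (by positivity : (0 : ℝ) ≤ (n : ℝ) ^ t)]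
    gcongr
    exact hf n

lemma sum_Ioc_abs_div_pow_le (hf : ∀ n, |f n| ≤ 1) (ht : 2 ≤ t) {N : ℕ} (hN : N ≠ 0)
    (M : ℕ) : ∑ k ∈ Ioc N (N + M), |f k / (k : ℝ) ^ t| ≤ ((N : ℝ) ^ (t - 1))⁻¹ := by
  calc ∑ k ∈ Ioc N (N + M), |f k / (k : ℝ) ^ t|
      ≤ ∑ k ∈ Ioc N (N + M), ((N : ℝ) ^ (t - 2))⁻¹ * ((k : ℝ) ^ 2)⁻¹ := by
        refine sum_le_sum fun k hk => ?_
        have hNk : (N : ℝ) ≤ k := by exact_mod_cast (mem_Ioc.1 hk).1.le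
        rw [abs_div, abs_of_nonneg (by positivity : (0 : ℝ) ≤ (k : ℝ) ^ t)]
        calc |f k| / (k : ℝ) ^ t ≤ 1 / (k : ℝ) ^ t := by gcongr; exact hf k
          _ = ((k : ℝ) ^ (t - 2))⁻¹ * ((k : ℝ) ^ 2)⁻¹ := by
            rw [one_div, ← mul_inv, ← pow_add, Nat.sub_add_cancel ht]
          _ ≤ ((N : ℝ) ^ (t - 2))⁻¹ * ((k : ℝ) ^ 2)⁻¹ := by gcongr
    _ = ((N : ℝ) ^ (t - 2))⁻¹ * ∑ k ∈ Ioc N (N + M), ((k : ℝ) ^ 2)⁻¹ :=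
        (mul_sum _ _ _).symm
    _ ≤ ((N : ℝ) ^ (t - 2))⁻¹ * (N : ℝ)⁻¹ := by
        gcongr
        exact (sum_Ioc_inv_sq_le_sub hN (by omega)).trans (sub_le_self _ (by positivity))
    _ = ((N : ℝ) ^ (t - 1))⁻¹ := by
        rw [← mul_inv, ← pow_succ, show t - 2 + 1 = t - 1 by omega]

lemma abs_tsum_sub_sum_Icc_div_pow_le (hf : ∀ n, |f n| ≤ 1) (ht : 2 ≤ t) {N : ℕ}
    (hN : N ≠ 0) :
    |∑' n, f n / (n : ℝ) ^ t - ∑ n ∈ Icc 1 N, f n / (n : ℝ) ^ t|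
      ≤ ((N : ℝ) ^ (t - 1))⁻¹ := by
  set g : ℕ → ℝ := fun n => f n / (n : ℝ) ^ t
  have hg : Summable g := summable_div_pow_of_abs_le_one hf ht
  -- the `n = 0` term is `f 0 / 0 = 0`
  have htail : ∑' n, g n - ∑ n ∈ Icc 1 N, g n = ∑' i, g (i + (N + 1)) := by
    rw [← hg.sum_add_tsum_nat_add (N + 1), range_eq_Ico,
      sum_eq_sum_Ico_succ_bot N.succ_pos, zero_add,
      Nat.succ_eq_add_one, Ico_add_one_right_eq_Icc]
    simp [g, show t ≠ 0 by omega]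
  rw [htail, ← Real.norm_eq_abs]
  have hshift : Summable fun i => ‖g (i + (N + 1))‖ := (summable_nat_add_iff (N + 1)).2 hg.norm
  refine (norm_tsum_le_tsum_norm hshift).trans ?_
  refine Real.tsum_le_of_sum_range_le (fun _ => norm_nonneg _) fun M => ?_
  calc ∑ i ∈ range M, ‖g (i + (N + 1))‖
      = ∑ k ∈ Ioc N (N + M), |f k / (k : ℝ) ^ t| := by
        rw [← Ico_add_one_add_one_eq_Ioc, sum_Ico_eq_sum_range,
          show N + M + 1 - (N + 1) = M by omega]
        exact sum_congr rfl fun i _ => by rw [Real.norm_eq_abs, add_comm]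
    _ ≤ ((N : ℝ) ^ (t - 1))⁻¹ := sum_Ioc_abs_div_pow_le hf ht hN M

lemma isBigO_tsum_sub_sum_Icc_floor_div_pow (hf : ∀ n, |f n| ≤ 1) (ht : 2 ≤ t) :
    (fun x : ℝ => ∑' n, f n / (n : ℝ) ^ t - ∑ n ∈ Icc 1 ⌊x⌋₊, f n / (n : ℝ) ^ t)
      =O[atTop] fun x => x ^ (1 - t : ℝ) := by
  refine IsBigO.of_bound (2 ^ (t - 1)) ?_
  filter_upwards [eventually_ge_atTop 1] with x hx
  have hx0 : 0 < x := by linarith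
  have hfloor : x / 2 < ⌊x⌋₊ := Nat.div_two_lt_floor hx
  rw [Real.norm_eq_abs, Real.norm_of_nonneg (by positivity),
    show (1 - t : ℝ) = -((t - 1 : ℕ) : ℝ) by push_cast [Nat.cast_sub (by omega : 1 ≤ t)]; ring,
    Real.rpow_neg hx0.le, Real.rpow_natCast]
  calc _ ≤ ((⌊x⌋₊ : ℝ) ^ (t - 1))⁻¹ :=
        abs_tsum_sub_sum_Icc_div_pow_le hf ht (Nat.floor_pos.2 hx).ne'
    _ ≤ ((x / 2) ^ (t - 1))⁻¹ := by gcongr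
    _ = 2 ^ (t - 1) * (x ^ (t - 1))⁻¹ := by rw [div_pow, inv_div, div_eq_mul_inv]

end Tail

lemma Nat.sq_mul_inj_of_squarefree {a₁ b₁ a₂ b₂ : ℕ} (ha₁ : Squarefree a₁)
    (ha₂ : Squarefree a₂) (hb₁ : b₁ ≠ 0) (hb₂ : b₂ ≠ 0) (h : b₁ ^ 2 * a₁ = b₂ ^ 2 * a₂) :
    a₁ = a₂ ∧ b₁ = b₂ := by
  have hfac (p : ℕ) : a₁.factorization p = a₂.factorization p ∧
      b₁.factorization p = b₂.factorization p := by
    have := congrArg (fun m => m.factorization p) h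
    simp only [Nat.factorization_mul (pow_ne_zero 2 hb₁) ha₁.ne_zero,
      Nat.factorization_mul (pow_ne_zero 2 hb₂) ha₂.ne_zero, Nat.factorization_pow,
      Finsupp.add_apply, Finsupp.smul_apply, smul_eq_mul] at this
    have := ha₁.natFactorization_le_one p
    have := ha₂.natFactorization_le_one p
    omega
  exact ⟨Nat.factorization_inj ha₁.ne_zero ha₂.ne_zero (Finsupp.ext fun p => (hfac p).1),
    Nat.factorization_inj hb₁ hb₂ (Finsupp.ext fun p => (hfac p).2)⟩

lemma tsum_one_div_pow_eq_tsum_absMoebius_div_pow_mul {t : ℕ} (ht : 2 ≤ t) :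
    ∑' n : ℕ, 1 / (n : ℝ) ^ t =
      (∑' n, absMoebius n / (n : ℝ) ^ t) * ∑' n : ℕ, 1 / (n : ℝ) ^ (2 * t) := by
  have hQ := (summable_div_pow_of_abs_le_one abs_absMoebius_le_one ht).norm
  have hZ := (Real.summable_one_div_nat_pow (p := 2 * t) |>.2 (by omega)).norm
  rw [tsum_mul_tsum_of_summable_norm hQ hZ]
  set F : ℕ × ℕ → ℝ := fun p => absMoebius p.1 / ((p.2 ^ 2 * p.1 : ℕ) : ℝ) ^ t
  have hF (p : ℕ × ℕ) : absMoebius p.1 / (p.1 : ℝ) ^ t * (1 / (p.2 : ℝ) ^ (2 * t)) = F p := by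
    simp only [F]
    push_cast
    rw [mul_pow, ← pow_mul, mul_comm 2 t]
    ring
  have hsupp (p : ℕ × ℕ) : F p ≠ 0 ↔ Squarefree p.1 ∧ p.2 ≠ 0 := by
    rw [← hF, absMoebius_eq_ite]
    split_ifs with ha
    · simp [ha, ha.ne_zero, show t ≠ 0 by omega]
    · simp [ha]
  simp only [hF]
  refine tsum_eq_tsum_of_ne_zero_bij (fun p => p.1.2 ^ 2 * p.1.1) ?_ ?_ ?_
  · rintro ⟨⟨a₁, b₁⟩, h₁⟩ ⟨⟨a₂, b₂⟩, h₂⟩ h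
    rw [Function.mem_support, hsupp] at h₁ h₂
    obtain ⟨rfl, rfl⟩ := Nat.sq_mul_inj_of_squarefree h₁.1 h₂.1 h₁.2 h₂.2 h
    rfl
  · intro n hn
    have hn0 : 0 < n := by
      rw [Nat.pos_iff_ne_zero]
      rintro rfl
      simp [show t ≠ 0 by omega] at hn
    obtain ⟨a, b, -, hb, hab, ha⟩ := Nat.sq_mul_squarefree_of_pos hn0
    exact ⟨⟨(a, b), (hsupp _).2 ⟨ha, hb.ne'⟩⟩, hab⟩
  · rintro ⟨⟨a, b⟩, h⟩
    rw [Function.mem_support, hsupp] at h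
    simp [F, absMoebius_eq_ite, h.1]

lemma riemannZeta_div_riemannZeta_two_mul {t : ℕ} (ht : 2 ≤ t) :
    riemannZeta t / riemannZeta (2 * t) = ((∑' n, absMoebius n / (n : ℝ) ^ t : ℝ) : ℂ) := by
  have hzeta (k : ℕ) (hk : 1 < k) : riemannZeta k = ((∑' n : ℕ, 1 / (n : ℝ) ^ k : ℝ) : ℂ) := by
    rw [zeta_nat_eq_tsum_of_gt_one hk, Complex.ofReal_tsum]
    push_cast
    rfl
  have h2t : riemannZeta (2 * t) ≠ 0 :=
    riemannZeta_ne_zero_of_one_lt_re (by norm_cast; omega)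
  rw [div_eq_iff h2t, show (2 * t : ℂ) = ((2 * t : ℕ) : ℂ) by push_cast; rfl,
    hzeta t (by omega), hzeta (2 * t) (by omega),
    tsum_one_div_pow_eq_tsum_absMoebius_div_pow_mul ht, Complex.ofReal_mul]

lemma dedekindPsi_div_pow (s : ℕ) {n : ℕ} (hn : n ≠ 0) :
    dedekindPsi s n / (n : ℝ) ^ s = ∑ d ∈ n.divisors, absMoebius d / (d : ℝ) ^ s := by
  rw [dedekindPsi, sum_div,
    ← Nat.sum_divisorsAntidiagonal' (f := fun _ d => absMoebius d / (d : ℝ) ^ s)]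
  refine sum_congr rfl fun p hp => ?_
  obtain ⟨rfl, -⟩ := Nat.mem_divisorsAntidiagonal.1 hp
  have hp1 : (p.1 : ℝ) ≠ 0 := by exact_mod_cast left_ne_zero_of_mul hn
  rw [absMoebius, Nat.cast_mul, mul_pow]
  field_simp

lemma sum_Icc_dedekindPsi_div_pow (s N : ℕ) :
    ∑ n ∈ Icc 1 N, dedekindPsi s n / (n : ℝ) ^ s =
      ∑ d ∈ Icc 1 N, absMoebius d / (d : ℝ) ^ s * ((N / d : ℕ) : ℝ) := by
  let g : ArithmeticFunction ℝ := ⟨fun d => absMoebius d / (d : ℝ) ^ s, by simp [absMoebius]⟩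
  have hg (n : ℕ) (hn : n ∈ Icc 1 N) : dedekindPsi s n / (n : ℝ) ^ s = (g * ζ) n := by
    rw [coe_mul_zeta_apply, dedekindPsi_div_pow s (by simp at hn; omega)]
    rfl
  rw [sum_congr rfl hg]
  exact sum_Ioc_mul_zeta_eq_sum g N

lemma natCast_floor_div_eq {x : ℝ} (hx : 0 ≤ x) (d : ℕ) :
    ((⌊x⌋₊ / d : ℕ) : ℝ) = x / d - vartheta (x / d) - 1 / 2 := by
  rw [← Nat.floor_div_natCast, natCast_floor_eq_intCast_floor (by positivity), vartheta]
  ring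

lemma sum_Icc_floor_dedekindPsi_div_pow (s : ℕ) {x : ℝ} (hx : 0 ≤ x) :
    ∑ n ∈ Icc 1 ⌊x⌋₊, dedekindPsi s n / (n : ℝ) ^ s =
      x * ∑ d ∈ Icc 1 ⌊x⌋₊, absMoebius d / (d : ℝ) ^ (s + 1)
        - ∑ d ∈ Icc 1 ⌊x⌋₊, absMoebius d / (d : ℝ) ^ s * vartheta (x / d)
        - (∑ d ∈ Icc 1 ⌊x⌋₊, absMoebius d / (d : ℝ) ^ s) / 2 := by
  rw [sum_Icc_dedekindPsi_div_pow, mul_sum, sum_div, ← sum_sub_distrib,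
    ← sum_sub_distrib]
  refine sum_congr rfl fun d _ => ?_
  rw [natCast_floor_div_eq hx]
  ring

/-- For fixed `s ≥ 2`, as `x → ∞`:
`∑_{n ≤ x} ψ_s(n)/n^s = (ζ(s+1)/ζ(2s+2)) x − ∑_{d ≤ x} (|μ(d)|/d^s) ϑ(x/d)
  − ζ(s)/(2ζ(2s)) + O_s(x^{1−s})`. -/
theorem dedekind_psi_partial_sum (s : ℕ) (hs : 2 ≤ s) :
    (fun x : ℝ =>
        ((∑ n ∈ Finset.Icc 1 ⌊x⌋₊, dedekindPsi s n / (n : ℝ) ^ s : ℝ) : ℂ)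
          - riemannZeta ((s : ℂ) + 1) / riemannZeta (2 * (s : ℂ) + 2) * (x : ℂ)
          + ((∑ d ∈ Finset.Icc 1 ⌊x⌋₊,
              |((ArithmeticFunction.moebius d : ℤ) : ℝ)| / (d : ℝ) ^ s *
                vartheta (x / (d : ℝ)) : ℝ) : ℂ)
          + riemannZeta (s : ℂ) / (2 * riemannZeta (2 * (s : ℂ))))
      =O[atTop] fun x : ℝ => x ^ ((1 : ℝ) - s) := by
  have hs1 : 2 ≤ s + 1 := by omega
  set tail : ℕ → ℝ → ℝ := fun t x =>
    ∑' n, absMoebius n / (n : ℝ) ^ t - ∑ n ∈ Icc 1 ⌊x⌋₊, absMoebius n / (n : ℝ) ^ t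
  have hζ : riemannZeta ((s : ℂ) + 1) / riemannZeta (2 * (s : ℂ) + 2) =
      ((∑' n, absMoebius n / (n : ℝ) ^ (s + 1) : ℝ) : ℂ) := by
    rw [← riemannZeta_div_riemannZeta_two_mul hs1]
    push_cast
    ring_nf
  have hx_tail : (fun x => x * tail (s + 1) x) =O[atTop] fun x => x ^ ((1 : ℝ) - s) := by
    refine ((isBigO_refl (fun x : ℝ => x) atTop).mul
      (isBigO_tsum_sub_sum_Icc_floor_div_pow abs_absMoebius_le_one hs1)).congr'
      EventuallyEq.rfl ?_
    filter_upwards [eventually_gt_atTop 0] with x hx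
    rw [show (1 : ℝ) - s = 1 + (1 - ((s + 1 : ℕ) : ℝ)) by push_cast; ring, Real.rpow_add hx,
      Real.rpow_one]
  have herror := hx_tail.neg_left.add
    ((isBigO_tsum_sub_sum_Icc_floor_div_pow abs_absMoebius_le_one hs).const_mul_left (1 / 2))
  refine (Complex.isBigO_ofReal_left.2 herror).congr' ?_ EventuallyEq.rfl
  filter_upwards [eventually_ge_atTop 0] with x hx
  rw [hζ, div_mul_eq_div_div_swap, riemannZeta_div_riemannZeta_two_mul hs,
    sum_Icc_floor_dedekindPsi_div_pow s hx]
  simp only [tail, absMoebius]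
  push_cast
  ring
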